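/- Fix x ∈ X and suppose there exist constants 1 < c < c' < c'' and r₀ ≥ 0 such that c' ≤ V(x,cr)/V(x,r) ≤ c'' for all r > r₀. Then ∫_a^∞ ds/V(x,s) < ∞ for every a > 0 (so the semigroup {P^t} is transient), and there exist constants k₁, k₂ > 0 depending only on c, c', c'' such that for every y ∈ X with r := d_*(x,y) > r₀ one has k₁ · r/V(x,r) ≤ g(x,y) ≤ k₂ · r/V(x,r). -/

import Mathlib

open MeasureTheory Metric Filter
open scoped ENNReal Classical

/-- The averaging operator `Q_r f(x) = μ(B_r(x))⁻¹ ∫_{B_r(x)} f dμ`. -/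
noncomputable def avgOp {X : Type*} [MetricSpace X] [MeasurableSpace X]
    (μ : Measure X) (r : ℝ) (f : X → ℝ) (x : X) : ℝ :=
  (μ (closedBall x r)).toReal⁻¹ * ∫ y in closedBall x r, f y ∂μ

/-- The isotropic Markov operator `P^t f(x) = ∫_[0,∞) Q_r f(x) dσ^t(r)`,
where `νt` is the Lebesgue–Stieltjes measure of `σ^t`. -/
noncomputable def isoOp {X : Type*} [MetricSpace X] [MeasurableSpace X]
    (μ : Measure X) (νt : Measure ℝ) (f : X → ℝ) (x : X) : ℝ :=
  ∫ r in Set.Ici (0:ℝ), avgOp μ r f x ∂νt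

/-- The heat kernel `p(t,x,y) = ∫_[d(x,y),∞) μ(B_r(x))⁻¹ dσ^t(r)`. -/
noncomputable def heatK {X : Type*} [MetricSpace X] [MeasurableSpace X]
    (μ : Measure X) (ν : ℝ → Measure ℝ) (t : ℝ) (x y : X) : ℝ≥0∞ :=
  ∫⁻ r in Set.Ici (dist x y), (μ (closedBall x r))⁻¹ ∂(ν t)

/-- The intrinsic ultra-metric `d_*(x,y) = 1/log(1/σ(d(x,y)))` for `x ≠ y`. -/
noncomputable def dstar {X : Type*} [MetricSpace X] (σ : ℝ → ℝ) (x y : X) : ℝ :=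
  if x = y then 0 else 1 / Real.log (1 / σ (dist x y))

/-- The closed ball `B*_s(x)` of the intrinsic ultra-metric. -/
def starBall {X : Type*} [MetricSpace X] (σ : ℝ → ℝ) (x : X) (s : ℝ) : Set X :=
  {y | dstar σ x y ≤ s}

/-- The spectral distribution function `N(x,τ) = 1/μ(B*_{1/τ}(x))`. -/
noncomputable def specN {X : Type*} [MetricSpace X] [MeasurableSpace X]
    (μ : Measure X) (σ : ℝ → ℝ) (x : X) (τ : ℝ) : ℝ≥0∞ :=
  (μ (starBall σ x (1 / τ)))⁻¹

/-- The Green function `g(x,y) = ∫_0^∞ p(t,x,y) dt`. -/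
noncomputable def greenF {X : Type*} [MetricSpace X] [MeasurableSpace X]
    (μ : Measure X) (ν : ℝ → Measure ℝ) (x y : X) : ℝ≥0∞ :=
  ∫⁻ t in Set.Ioi (0:ℝ), heatK μ ν t x y

/-!
Write `φ r = 1 / log (1 / σ r)`, so that `d_* = φ ∘ d`. Since
`∫_0^∞ (σ(b)^t - σ(a)^t) dt = φ(b) - φ(a)`, the time-integrated measure `∫_0^∞ dσ^t dt` is the
Lebesgue–Stieltjes measure of the left-continuous function `φ`, i.e. the image of Lebesgue measure
on `[0, ∞)` under the generalized inverse of `φ`. Changing variables turns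
`g(x,y) = ∫_{[d(x,y),∞)} μ(B_r(x))⁻¹ d(∫_0^∞ dσ^t dt)(r)` into `∫_{d_*(x,y)}^∞ ds / V(x,s)`.

The growth bounds on `V` then give both estimates: the lower one from the single interval
`(r, c r]`, the upper one by cutting `(r, ∞)` at the points `c^n r`, where `1/V` has decayed by
`c'^{-n}` while the pieces have length `c^n (c - 1) r`, a geometric series of ratio `c / c' < 1`.
-/

open Set Topology

lemma lintegral_rpow_Ioi_zero {p : ℝ} (hp0 : 0 ≤ p) (hp1 : p < 1) :
    ∫⁻ t in Ioi (0 : ℝ), ENNReal.ofReal (p ^ t) = ENNReal.ofReal (1 / Real.log (1 / p)) := by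
  rcases hp0.eq_or_lt with rfl | hp0
  -- for `p = 0` the right side is `0` too, through the junk values `1 / 0 = 0` and `log 0 = 0`
  · have hzero : ∀ t ∈ Ioi (0 : ℝ), ENNReal.ofReal ((0 : ℝ) ^ t) = 0 := fun t ht => by
      simp [Real.zero_rpow (ne_of_gt ht)]
    rw [setLIntegral_congr_fun measurableSet_Ioi hzero]
    simp
  have hlog : Real.log p < 0 := Real.log_neg hp0 hp1
  have hexp : ∀ t : ℝ, p ^ t = Real.exp (Real.log p * t) := fun t => Real.rpow_def_of_pos hp0 t
  simp_rw [hexp]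
  rw [← ofReal_integral_eq_lintegral_ofReal (integrableOn_exp_mul_Ioi hlog 0)
      (Eventually.of_forall fun t => (Real.exp_pos _).le),
    integral_exp_mul_Ioi hlog 0]
  simp [neg_div, div_neg]

lemma one_div_log_one_div_nonneg {p : ℝ} (hp0 : 0 ≤ p) (hp1 : p < 1) :
    0 ≤ 1 / Real.log (1 / p) := by
  rw [one_div p, Real.log_inv]
  exact one_div_nonneg.2 (neg_nonneg.2 (Real.log_nonpos hp0 hp1.le))

lemma lintegral_rpow_sub_rpow_Ioi_zero {p q : ℝ} (hq0 : 0 ≤ q) (hqp : q ≤ p) (hp1 : p < 1) :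
    ∫⁻ t in Ioi (0 : ℝ), ENNReal.ofReal (p ^ t - q ^ t) =
      ENNReal.ofReal (1 / Real.log (1 / p) - 1 / Real.log (1 / q)) := by
  have hq1 : q < 1 := hqp.trans_lt hp1
  simp_rw [ENNReal.ofReal_sub _ (Real.rpow_nonneg hq0 _)]
  rw [lintegral_sub (by fun_prop : Measurable fun t : ℝ => ENNReal.ofReal (q ^ t))
      (by rw [lintegral_rpow_Ioi_zero hq0 hq1]; exact ENNReal.ofReal_ne_top)
      (ae_restrict_of_forall_mem measurableSet_Ioi fun t ht =>
        ENNReal.ofReal_le_ofReal (Real.rpow_le_rpow hq0 hqp (le_of_lt ht))),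
    lintegral_rpow_Ioi_zero (hq0.trans hqp) hp1, lintegral_rpow_Ioi_zero hq0 hq1,
    ENNReal.ofReal_sub _ (one_div_log_one_div_nonneg hq0 hq1)]

structure IsDistanceDistribution (σ : ℝ → ℝ) : Prop where
  strictMonoOn : StrictMonoOn σ (Ici 0)
  map_zero : σ 0 = 0
  lt_one : ∀ r, 0 ≤ r → σ r < 1
  continuousWithinAt_Iic : ∀ r, 0 < r → ContinuousWithinAt σ (Iic r) r
  tendsto_nhdsGT_zero : Tendsto σ (𝓝[>] 0) (𝓝 0)
  tendsto_atTop : Tendsto σ atTop (𝓝 1)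

namespace IsDistanceDistribution

variable {σ : ℝ → ℝ} (hσ : IsDistanceDistribution σ)
include hσ

lemma pos {r : ℝ} (hr : 0 < r) : 0 < σ r := by
  simpa [hσ.map_zero] using hσ.strictMonoOn self_mem_Ici hr.le hr

lemma nonneg {r : ℝ} (hr : 0 ≤ r) : 0 ≤ σ r := by
  rcases hr.eq_or_lt with rfl | hr
  exacts [hσ.map_zero.ge, (hσ.pos hr).le]

lemma mem_Ico {r : ℝ} (hr : 0 ≤ r) : σ r ∈ Ico 0 1 := ⟨hσ.nonneg hr, hσ.lt_one r hr⟩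

end IsDistanceDistribution

lemma isDistanceDistribution_of_mem_Icc {σ : ℝ → ℝ} (hmono : StrictMonoOn σ (Ici 0))
    (hrange : ∀ r, 0 ≤ r → σ r ∈ Icc (0 : ℝ) 1)
    (hlc : ∀ r, 0 < r → ContinuousWithinAt σ (Iic r) r)
    (hzero : Tendsto σ (𝓝[>] 0) (𝓝 0)) (htop : Tendsto σ atTop (𝓝 1)) :
    IsDistanceDistribution σ where
  strictMonoOn := hmono
  map_zero := by
    refine le_antisymm (ge_of_tendsto hzero ?_) (hrange 0 le_rfl).1
    filter_upwards [self_mem_nhdsWithin] with r hr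
    exact (hmono self_mem_Ici (mem_Ici.2 (le_of_lt hr)) hr).le
  lt_one r hr := (hmono hr (by linarith : (0 : ℝ) ≤ r + 1) (by linarith)).trans_le
    (hrange (r + 1) (by linarith)).2
  continuousWithinAt_Iic := hlc
  tendsto_nhdsGT_zero := hzero
  tendsto_atTop := htop

lemma monotoneOn_one_div_log_one_div :
    MonotoneOn (fun p : ℝ => 1 / Real.log (1 / p)) (Ico 0 1) := by
  rintro p ⟨hp0, -⟩ q ⟨-, hq1⟩ hpq
  rcases hp0.eq_or_lt with rfl | hp0
  · simpa using one_div_log_one_div_nonneg (hp0.trans hpq) hq1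
  simp only [one_div p, one_div q, Real.log_inv]
  exact one_div_le_one_div_of_le (neg_pos.2 (Real.log_neg (hp0.trans_le hpq) hq1))
    (neg_le_neg (Real.log_le_log hp0 hpq))

/-- `d_*` as a function of `d`; `max r 0` sets it to `0` on negative radii, keeping it monotone on
all of `ℝ`. -/
noncomputable def dstarOfDist (σ : ℝ → ℝ) (r : ℝ) : ℝ := 1 / Real.log (1 / σ (max r 0))

section dstarOfDist

variable {σ : ℝ → ℝ}

lemma dstarOfDist_of_pos {r : ℝ} (hr : 0 < r) :
    dstarOfDist σ r = 1 / Real.log (1 / σ r) := by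
  rw [dstarOfDist, max_eq_left hr.le]

variable (hσ : IsDistanceDistribution σ)
include hσ

lemma dstarOfDist_of_nonpos {r : ℝ} (hr : r ≤ 0) : dstarOfDist σ r = 0 := by
  simp [dstarOfDist, max_eq_right hr, hσ.map_zero]

lemma dstarOfDist_nonneg (r : ℝ) : 0 ≤ dstarOfDist σ r :=
  one_div_log_one_div_nonneg (hσ.nonneg (le_max_right r 0)) (hσ.lt_one _ (le_max_right r 0))

lemma monotone_dstarOfDist : Monotone (dstarOfDist σ) := fun r r' h =>
  monotoneOn_one_div_log_one_div (hσ.mem_Ico (le_max_right r 0)) (hσ.mem_Ico (le_max_right r' 0))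
    (hσ.strictMonoOn.monotoneOn (le_max_right r 0) (le_max_right r' 0) (max_le_max_right 0 h))

lemma dstar_eq_dstarOfDist {X : Type*} [MetricSpace X] (x y : X) :
    dstar σ x y = dstarOfDist σ (dist x y) := by
  rcases eq_or_ne x y with rfl | hxy
  · simp [dstar, dstarOfDist_of_nonpos hσ]
  · rw [dstar, if_neg hxy, dstarOfDist_of_pos (dist_pos.2 hxy)]

lemma tendsto_dstarOfDist_atTop : Tendsto (dstarOfDist σ) atTop atTop := by
  have hlog : Tendsto (fun r => Real.log (1 / σ r)) atTop (𝓝[>] 0) := by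
    have hinv : Tendsto (fun r => 1 / σ r) atTop (𝓝 1) := by
      simpa [one_div] using hσ.tendsto_atTop.inv₀ one_ne_zero
    refine tendsto_nhdsWithin_iff.2 ⟨?_, ?_⟩
    · simpa only [Function.comp_def, Real.log_one] using
        (Real.continuousAt_log one_ne_zero).tendsto.comp hinv
    · filter_upwards [eventually_gt_atTop 0] with r hr
      exact Real.log_pos (one_lt_one_div (hσ.pos hr) (hσ.lt_one r hr.le))
  refine (tendsto_inv_nhdsGT_zero.comp hlog).congr' ?_
  filter_upwards [eventually_gt_atTop 0] with r hr
  simp [dstarOfDist_of_pos hr]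

lemma tendsto_dstarOfDist_nhdsGT_zero : Tendsto (dstarOfDist σ) (𝓝[>] 0) (𝓝 0) := by
  have hσ' : Tendsto σ (𝓝[>] 0) (𝓝[>] 0) := tendsto_nhdsWithin_iff.2
    ⟨hσ.tendsto_nhdsGT_zero, eventually_nhdsWithin_of_forall fun r hr => hσ.pos hr⟩
  have h := tendsto_inv_atTop_zero.comp
    (Real.tendsto_log_atTop.comp (tendsto_inv_nhdsGT_zero.comp hσ'))
  refine h.congr' (eventually_nhdsWithin_of_forall fun r hr => ?_)
  simp [dstarOfDist_of_pos (mem_Ioi.1 hr)]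

lemma continuousWithinAt_dstarOfDist {r : ℝ} (hr : 0 < r) :
    ContinuousWithinAt (dstarOfDist σ) (Iic r) r := by
  have hlog : Real.log (1 / σ r) ≠ 0 :=
    (Real.log_pos (one_lt_one_div (hσ.pos hr) (hσ.lt_one r hr.le))).ne'
  have hg : ContinuousAt (fun p : ℝ => 1 / Real.log (1 / p)) (σ r) :=
    continuousAt_const.div ((Real.continuousAt_log (one_div_ne_zero (hσ.pos hr).ne')).comp
      (continuousAt_const.div continuousAt_id (hσ.pos hr).ne')) hlog
  refine (hg.comp_continuousWithinAt (hσ.continuousWithinAt_Iic r hr)).congr_of_eventuallyEq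
    ?_ (dstarOfDist_of_pos hr)
  filter_upwards [nhdsWithin_le_nhds (Ioi_mem_nhds hr)] with t ht
  exact dstarOfDist_of_pos ht

end dstarOfDist

/-- The generalized inverse of `dstarOfDist` (see `dstarOfDist_le_iff`); the `0` keeps the set
nonempty. -/
noncomputable def distOfDstar (σ : ℝ → ℝ) (s : ℝ) : ℝ :=
  sSup (insert 0 {r | dstarOfDist σ r ≤ s})

section distOfDstar

variable {σ : ℝ → ℝ} (hσ : IsDistanceDistribution σ)
include hσ

lemma bddAbove_dstarOfDist_le (s : ℝ) : BddAbove (insert 0 {r | dstarOfDist σ r ≤ s}) := by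
  obtain ⟨R, hR⟩ := ((tendsto_dstarOfDist_atTop hσ).eventually_gt_atTop s).exists_forall_of_atTop
  refine ⟨max R 0, ?_⟩
  rintro r (rfl | hr)
  · exact le_max_right R 0
  · by_contra! hRr
    exact (hR r (le_max_left R 0 |>.trans hRr.le)).not_ge hr

lemma distOfDstar_nonneg (s : ℝ) : 0 ≤ distOfDstar σ s :=
  le_csSup (bddAbove_dstarOfDist_le hσ s) (mem_insert 0 _)

lemma monotone_distOfDstar : Monotone (distOfDstar σ) := fun _ s' hss' =>
  csSup_le_csSup (bddAbove_dstarOfDist_le hσ s') (insert_nonempty _ _)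
    (insert_subset_insert fun _ hr => le_trans hr hss')

lemma dstarOfDist_distOfDstar_le {s : ℝ} (hs : 0 ≤ s) : dstarOfDist σ (distOfDstar σ s) ≤ s := by
  rcases (distOfDstar_nonneg hσ s).eq_or_lt with h0 | hpos
  · rwa [← h0, dstarOfDist_of_nonpos hσ le_rfl]
  -- left continuity of `dstarOfDist` makes its sublevel sets closed
  refine le_of_tendsto ((continuousWithinAt_dstarOfDist hσ hpos).mono Iio_subset_Iic_self)
    (eventually_nhdsWithin_of_forall fun t ht => ?_)
  obtain ⟨r, hr, htr⟩ := exists_lt_of_lt_csSup (insert_nonempty _ _) (mem_Iio.1 ht)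
  rcases hr with rfl | hr
  · exact (monotone_dstarOfDist hσ htr.le).trans ((dstarOfDist_of_nonpos hσ le_rfl).trans_le hs)
  · exact (monotone_dstarOfDist hσ htr.le).trans hr

lemma dstarOfDist_le_iff {s : ℝ} (hs : 0 ≤ s) (r : ℝ) :
    dstarOfDist σ r ≤ s ↔ r ≤ distOfDstar σ s :=
  ⟨fun hr => le_csSup (bddAbove_dstarOfDist_le hσ s) (mem_insert_of_mem 0 hr),
    fun hr => (monotone_dstarOfDist hσ hr).trans (dstarOfDist_distOfDstar_le hσ hs)⟩

lemma distOfDstar_pos {s : ℝ} (hs : 0 < s) : 0 < distOfDstar σ s := by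
  obtain ⟨r, hrs, hr⟩ := (((tendsto_dstarOfDist_nhdsGT_zero hσ).eventually
    (eventually_lt_nhds hs)).and self_mem_nhdsWithin).exists
  exact hr.trans_le ((dstarOfDist_le_iff hσ hs.le r).1 hrs.le)

lemma preimage_distOfDstar_Ici_inter_Ici (d : ℝ) :
    distOfDstar σ ⁻¹' Ici d ∩ Ici 0 = Ici (dstarOfDist σ d) := by
  ext s
  simp only [mem_inter_iff, mem_preimage, mem_Ici]
  constructor
  · rintro ⟨hd, hs⟩
    exact (dstarOfDist_le_iff hσ hs d).2 hd
  · intro hd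
    have hs := (dstarOfDist_nonneg hσ d).trans hd
    exact ⟨(dstarOfDist_le_iff hσ hs d).1 hd, hs⟩

lemma preimage_distOfDstar_Ico_inter_Ici (a b : ℝ) :
    distOfDstar σ ⁻¹' Ico a b ∩ Ici 0 = Ico (dstarOfDist σ a) (dstarOfDist σ b) := by
  rw [← Ici_sdiff_Ici, preimage_sdiff, inter_sdiff_distrib_right,
    preimage_distOfDstar_Ici_inter_Ici hσ, preimage_distOfDstar_Ici_inter_Ici hσ, Ici_sdiff_Ici]

lemma starBall_eq_closedBall {X : Type*} [MetricSpace X] (x : X) {s : ℝ} (hs : 0 ≤ s) :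
    starBall σ x s = closedBall x (distOfDstar σ s) := by
  ext y
  rw [starBall, mem_ofPred_eq, dstar_eq_dstarOfDist hσ, mem_closedBall, dist_comm y x]
  exact dstarOfDist_le_iff hσ hs _

end distOfDstar

structure IsStieltjesMeasureOfPow (σ : ℝ → ℝ) (ν : ℝ → Measure ℝ) : Prop where
  measure_Ico : ∀ t : ℝ, 0 < t → ∀ a b : ℝ, 0 ≤ a → a ≤ b →
    ν t (Ico a b) = ENNReal.ofReal (σ b ^ t - σ a ^ t)
  measure_Iio_zero : ∀ t : ℝ, 0 < t → ν t (Iio 0) = 0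

namespace IsStieltjesMeasureOfPow

variable {σ : ℝ → ℝ} {ν : ℝ → Measure ℝ} (hν : IsStieltjesMeasureOfPow σ ν)
include hν

lemma measure_Ico_eq {t : ℝ} (ht : 0 < t) {a b : ℝ} (hab : a ≤ b) :
    ν t (Ico a b) = ENNReal.ofReal (σ (max b 0) ^ t - σ (max a 0) ^ t) := by
  rcases le_or_gt b 0 with hb | hb
  · rw [measure_mono_null (fun z hz => mem_Iio.2 (hz.2.trans_le hb)) (hν.measure_Iio_zero t ht),
      max_eq_right hb, max_eq_right (hab.trans hb), sub_self, ENNReal.ofReal_zero]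
  rcases le_or_gt 0 a with ha | ha
  · rw [hν.measure_Ico t ht a b ha hab, max_eq_left hb.le, max_eq_left ha]
  · rw [← Ico_union_Ico_eq_Ico ha.le hb.le, measure_union Ico_disjoint_Ico_same measurableSet_Ico,
      measure_mono_null (fun z hz => hz.2) (hν.measure_Iio_zero t ht), zero_add,
      hν.measure_Ico t ht 0 b le_rfl hb.le, max_eq_left hb.le, max_eq_right ha.le]

lemma isProbabilityMeasure (hσ : IsDistanceDistribution σ) {t : ℝ} (ht : 0 < t) :
    IsProbabilityMeasure (ν t) := by
  have hmono : Monotone fun n : ℕ => Ico (-(n : ℝ)) n := fun m n hmn =>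
    Ico_subset_Ico (neg_le_neg (Nat.cast_le.2 hmn)) (Nat.cast_le.2 hmn)
  have hunion : ⋃ n : ℕ, Ico (-(n : ℝ)) n = univ := by
    refine eq_univ_of_forall fun z => mem_iUnion.2 ?_
    obtain ⟨n, hn⟩ := exists_nat_gt |z|
    exact ⟨n, neg_le.1 ((neg_le_abs z).trans hn.le), (le_abs_self z).trans_lt hn⟩
  have hval : ∀ n : ℕ, ν t (Ico (-(n : ℝ)) n) = ENNReal.ofReal (σ n ^ t) := fun n => by
    rw [hν.measure_Ico_eq ht (neg_le_self n.cast_nonneg), max_eq_left n.cast_nonneg,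
      max_eq_right (neg_nonpos.2 n.cast_nonneg), hσ.map_zero, Real.zero_rpow ht.ne', sub_zero]
  have hlim : Tendsto (fun n : ℕ => ENNReal.ofReal (σ n ^ t)) atTop (𝓝 1) := by
    simpa using ENNReal.tendsto_ofReal ((hσ.tendsto_atTop.comp
      tendsto_natCast_atTop_atTop).rpow_const (Or.inl one_ne_zero) (p := t))
  constructor
  rw [← hunion]
  refine tendsto_nhds_unique (tendsto_measure_iUnion_atTop hmono) ?_
  simpa only [Function.comp_def, hval] using hlim

end IsStieltjesMeasureOfPow

/-- Only the values at `t > 0` are ever integrated; `dirac 0` elsewhere makes this a Markov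
kernel. -/
noncomputable def stieltjesKernel (ν : ℝ → Measure ℝ) (t : ℝ) : Measure ℝ :=
  if 0 < t then ν t else Measure.dirac 0

/-- The measure `∫_0^∞ ν_t dt` on radii; integrating `r ↦ μ(B_r(x))⁻¹` over `[d(x,y), ∞)`
against it gives the Green function. -/
noncomputable def greenMeasure (ν : ℝ → Measure ℝ) : Measure ℝ :=
  (volume.restrict (Ioi 0)).bind (stieltjesKernel ν)

section greenMeasure

variable {σ : ℝ → ℝ} {ν : ℝ → Measure ℝ}
  (hσ : IsDistanceDistribution σ) (hν : IsStieltjesMeasureOfPow σ ν)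
include hσ hν

lemma measurable_stieltjesKernel : Measurable (stieltjesKernel ν) := by
  have : ∀ t, IsProbabilityMeasure (stieltjesKernel ν t) := fun t => by
    unfold stieltjesKernel
    split_ifs with ht
    exacts [hν.isProbabilityMeasure hσ ht, inferInstance]
  refine .measure_of_isPiSystem_of_isProbabilityMeasure (borel_eq_generateFrom_Ico ℝ)
    (isPiSystem_Ico id id) ?_
  rintro _ ⟨a, b, hab, rfl⟩
  have heq : (fun t => stieltjesKernel ν t (Ico a b)) = fun t =>
      if 0 < t then ENNReal.ofReal (σ (max b 0) ^ t - σ (max a 0) ^ t)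
      else Measure.dirac (0 : ℝ) (Ico a b) := by
    ext t
    unfold stieltjesKernel
    split_ifs with ht
    exacts [hν.measure_Ico_eq ht hab.le, rfl]
  rw [heq]
  exact Measurable.ite measurableSet_Ioi (by fun_prop) measurable_const

lemma greenMeasure_Ico (a b : ℝ) :
    greenMeasure ν (Ico a b) = ENNReal.ofReal (dstarOfDist σ b - dstarOfDist σ a) := by
  rcases le_or_gt b a with hba | hab
  · rw [Ico_eq_empty hba.not_gt, measure_empty, eq_comm, ENNReal.ofReal_eq_zero, sub_nonpos]
    exact monotone_dstarOfDist hσ hba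
  have hmax : max a 0 ≤ max b 0 := max_le_max_right 0 hab.le
  rw [greenMeasure, Measure.bind_apply measurableSet_Ico
      (measurable_stieltjesKernel hσ hν).aemeasurable,
    setLIntegral_congr_fun measurableSet_Ioi fun t (ht : 0 < t) => by
      rw [stieltjesKernel, if_pos ht, hν.measure_Ico_eq ht hab.le],
    lintegral_rpow_sub_rpow_Ioi_zero (hσ.nonneg (le_max_right a 0))
      (hσ.strictMonoOn.monotoneOn (le_max_right a 0) (le_max_right b 0) hmax)
      (hσ.lt_one _ (le_max_right b 0))]
  rfl

lemma greenMeasure_eq_map :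
    greenMeasure ν = (volume.restrict (Ici 0)).map (distOfDstar σ) := by
  refine Measure.ext_of_Ico' _ _ (fun a b _ => by simp [greenMeasure_Ico hσ hν]) fun a b _ => ?_
  rw [Measure.map_apply (monotone_distOfDstar hσ).measurable measurableSet_Ico,
    Measure.restrict_apply ((monotone_distOfDstar hσ).measurable measurableSet_Ico),
    preimage_distOfDstar_Ico_inter_Ici hσ, Real.volume_Ico, greenMeasure_Ico hσ hν]

end greenMeasure

lemma greenF_eq_lintegral_inv_measure_starBall {X : Type*} [MetricSpace X] [MeasurableSpace X]
    {σ : ℝ → ℝ} {ν : ℝ → Measure ℝ} (hσ : IsDistanceDistribution σ)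
    (hν : IsStieltjesMeasureOfPow σ ν) (μ : Measure X) (x y : X) :
    greenF μ ν x y = ∫⁻ s in Ioi (dstar σ x y), (μ (starBall σ x s))⁻¹ := by
  set G : ℝ → ℝ≥0∞ := fun r => (μ (closedBall x r))⁻¹
  have hG : Measurable G :=
    (Monotone.measurable fun _ _ h => measure_mono (closedBall_subset_closedBall h)).inv
  have hρ : Measurable (distOfDstar σ) := (monotone_distOfDstar hσ).measurable
  calc greenF μ ν x y
      = ∫⁻ t in Ioi 0, ∫⁻ r, (Ici (dist x y)).indicator G r ∂stieltjesKernel ν t := by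
        refine setLIntegral_congr_fun measurableSet_Ioi fun t (ht : 0 < t) => ?_
        rw [heatK, stieltjesKernel, if_pos ht, lintegral_indicator measurableSet_Ici]
    _ = ∫⁻ r in Ici (dist x y), G r ∂greenMeasure ν := by
        rw [← lintegral_indicator measurableSet_Ici, greenMeasure, Measure.lintegral_bind
          (measurable_stieltjesKernel hσ hν).aemeasurable
          (hG.indicator measurableSet_Ici).aemeasurable]
    _ = ∫⁻ s in Ici (dstarOfDist σ (dist x y)), G (distOfDstar σ s) := by
        rw [greenMeasure_eq_map hσ hν, setLIntegral_map measurableSet_Ici hG hρ,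
          Measure.restrict_restrict (hρ measurableSet_Ici), preimage_distOfDstar_Ici_inter_Ici hσ]
    _ = ∫⁻ s in Ioi (dstar σ x y), (μ (starBall σ x s))⁻¹ := by
        rw [dstar_eq_dstarOfDist hσ, setLIntegral_congr Ioi_ae_eq_Ici.symm]
        refine setLIntegral_congr_fun measurableSet_Ioi fun s hs => ?_
        rw [starBall_eq_closedBall hσ x ((dstarOfDist_nonneg hσ _).trans (le_of_lt hs))]

lemma Ici_subset_iUnion_Ico_pow_mul {c ρ : ℝ} (hc : 1 < c) (hρ : 0 < ρ) :
    Ici ρ ⊆ ⋃ n : ℕ, Ico (c ^ n * ρ) (c ^ (n + 1) * ρ) := by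
  intro s (hs : ρ ≤ s)
  obtain ⟨n, hn, hn'⟩ := exists_nat_pow_near ((one_le_div hρ).2 hs) hc
  exact mem_iUnion.2 ⟨n, (le_div_iff₀ hρ).1 hn, (div_lt_iff₀ hρ).1 hn'⟩

section MonotoneVolume

variable {V : ℝ → ℝ≥0∞}

lemma setLIntegral_inv_le_of_subset_Ici (hV : Monotone V) {s : Set ℝ} (hs : MeasurableSet s)
    {a : ℝ} (hsa : s ⊆ Ici a) : ∫⁻ x in s, (V x)⁻¹ ≤ (V a)⁻¹ * volume s := by
  rw [← setLIntegral_const]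
  exact setLIntegral_mono' hs fun x hx => ENNReal.inv_le_inv' (hV (hsa hx))

lemma pow_mul_le_of_mul_le {c c' ρ : ℝ} (hc : 1 ≤ c) (hρ : 0 ≤ ρ)
    (hgrow : ∀ r, ρ ≤ r → ENNReal.ofReal c' * V r ≤ V (c * r)) (n : ℕ) :
    ENNReal.ofReal c' ^ n * V ρ ≤ V (c ^ n * ρ) := by
  induction n with
  | zero => simp
  | succ n ih =>
    calc ENNReal.ofReal c' ^ (n + 1) * V ρ = ENNReal.ofReal c' * (ENNReal.ofReal c' ^ n * V ρ) := by
          ring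
      _ ≤ ENNReal.ofReal c' * V (c ^ n * ρ) := mul_le_mul_right ih _
      _ ≤ V (c ^ (n + 1) * ρ) := by
          rw [pow_succ', mul_assoc]
          exact hgrow _ (le_mul_of_one_le_left hρ (one_le_pow₀ hc))

lemma lintegral_Ioi_inv_le_of_mul_le (hV : Monotone V) {c c' ρ : ℝ} (hc : 1 < c) (hcc' : c < c')
    (hρ : 0 < ρ) (hgrow : ∀ r, ρ ≤ r → ENNReal.ofReal c' * V r ≤ V (c * r)) :
    ∫⁻ s in Ioi ρ, (V s)⁻¹ ≤
      ENNReal.ofReal ((c - 1) / (1 - c / c')) * (ENNReal.ofReal ρ / V ρ) := by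
  have hc0 : 0 < c := one_pos.trans hc
  have hc'0 : 0 < c' := hc0.trans hcc'
  have hq : 0 < 1 - c / c' := sub_pos.2 ((div_lt_one hc'0).2 hcc')
  set K := ENNReal.ofReal (c - 1) * (ENNReal.ofReal ρ / V ρ)
  have hpiece : ∀ n : ℕ, ∫⁻ s in Ico (c ^ n * ρ) (c ^ (n + 1) * ρ), (V s)⁻¹ ≤
      ENNReal.ofReal (c / c') ^ n * K := fun n => by
    have hVn := ENNReal.inv_le_inv' (pow_mul_le_of_mul_le hc.le hρ.le hgrow n)
    rw [ENNReal.mul_inv (Or.inl (pow_ne_zero n (ENNReal.ofReal_pos.2 hc'0).ne'))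
      (Or.inl (ENNReal.pow_ne_top ENNReal.ofReal_ne_top))] at hVn
    calc ∫⁻ s in Ico (c ^ n * ρ) (c ^ (n + 1) * ρ), (V s)⁻¹
        ≤ (V (c ^ n * ρ))⁻¹ * ENNReal.ofReal (c ^ n * ρ * (c - 1)) := by
          refine (setLIntegral_inv_le_of_subset_Ici hV measurableSet_Ico
            fun _ hs => hs.1).trans_eq ?_
          rw [Real.volume_Ico]
          ring_nf
      _ ≤ (ENNReal.ofReal c' ^ n)⁻¹ * (V ρ)⁻¹ * ENNReal.ofReal (c ^ n * ρ * (c - 1)) :=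
          mul_le_mul_left hVn _
      _ = ENNReal.ofReal (c / c') ^ n * K := by
          rw [ENNReal.ofReal_mul (by positivity), ENNReal.ofReal_mul (by positivity),
            ENNReal.ofReal_pow hc0.le, ENNReal.ofReal_div_of_pos hc'0, ENNReal.div_eq_inv_mul,
            mul_pow, ENNReal.inv_pow]
          simp only [K, ENNReal.div_eq_inv_mul]
          ring
  calc ∫⁻ s in Ioi ρ, (V s)⁻¹
      ≤ ∫⁻ s in ⋃ n : ℕ, Ico (c ^ n * ρ) (c ^ (n + 1) * ρ), (V s)⁻¹ :=
        lintegral_mono_set (Ioi_subset_Ici_self.trans (Ici_subset_iUnion_Ico_pow_mul hc hρ))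
    _ ≤ ∑' n : ℕ, ∫⁻ s in Ico (c ^ n * ρ) (c ^ (n + 1) * ρ), (V s)⁻¹ := lintegral_iUnion_le _ _
    _ ≤ ∑' n : ℕ, ENNReal.ofReal (c / c') ^ n * K := ENNReal.tsum_le_tsum hpiece
    _ = ENNReal.ofReal ((c - 1) / (1 - c / c')) * (ENNReal.ofReal ρ / V ρ) := by
        rw [ENNReal.tsum_mul_right, ENNReal.tsum_geometric, ENNReal.ofReal_div_of_pos hq,
          ENNReal.ofReal_sub _ (div_pos hc0 hc'0).le, ENNReal.ofReal_one, ENNReal.div_eq_inv_mul]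
        ring

lemma le_lintegral_Ioi_inv_of_le_mul (hV : Monotone V) {c c'' r : ℝ} (hc : 1 < c) (hc'' : 0 < c'')
    (hbound : V (c * r) ≤ ENNReal.ofReal c'' * V r) :
    ENNReal.ofReal ((c - 1) / c'') * (ENNReal.ofReal r / V r) ≤ ∫⁻ s in Ioi r, (V s)⁻¹ := by
  have hVc := ENNReal.inv_le_inv' hbound
  rw [ENNReal.mul_inv (Or.inl (ENNReal.ofReal_pos.2 hc'').ne') (Or.inl ENNReal.ofReal_ne_top)]
    at hVc
  calc ENNReal.ofReal ((c - 1) / c'') * (ENNReal.ofReal r / V r)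
      = (ENNReal.ofReal c'')⁻¹ * (V r)⁻¹ * ENNReal.ofReal (c * r - r) := by
        rw [ENNReal.ofReal_div_of_pos hc'', show c * r - r = (c - 1) * r by ring,
          ENNReal.ofReal_mul (sub_nonneg.2 hc.le), ENNReal.div_eq_inv_mul, ENNReal.div_eq_inv_mul]
        ring
    _ ≤ (V (c * r))⁻¹ * volume (Ioc r (c * r)) := by
        rw [Real.volume_Ioc]
        exact mul_le_mul_left hVc _
    _ = ∫⁻ _ in Ioc r (c * r), (V (c * r))⁻¹ := (setLIntegral_const _ _).symm
    _ ≤ ∫⁻ s in Ioc r (c * r), (V s)⁻¹ :=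
        setLIntegral_mono' measurableSet_Ioc fun s hs => ENNReal.inv_le_inv' (hV hs.2)
    _ ≤ ∫⁻ s in Ioi r, (V s)⁻¹ := lintegral_mono_set Ioc_subset_Ioi_self

lemma lintegral_Ioi_inv_lt_top (hV : Monotone V) {a ρ : ℝ} (ha : 0 < V a)
    (hρ : ∫⁻ s in Ioi ρ, (V s)⁻¹ < ⊤) : ∫⁻ s in Ioi a, (V s)⁻¹ < ⊤ := by
  have hsub : Ioi a ⊆ Ioc a ρ ∪ Ioi ρ := fun s hs => by
    rcases le_or_gt s ρ with h | h
    exacts [Or.inl ⟨hs, h⟩, Or.inr h]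
  refine ((lintegral_mono_set hsub).trans (lintegral_union_le _ _ _)).trans_lt
    (ENNReal.add_lt_top.2 ⟨?_, hρ⟩)
  refine (setLIntegral_inv_le_of_subset_Ici hV measurableSet_Ioc
    fun _ hs => le_of_lt hs.1).trans_lt ?_
  rw [Real.volume_Ioc]
  exact ENNReal.mul_lt_top (ENNReal.inv_lt_top.2 ha) ENNReal.ofReal_lt_top

end MonotoneVolume

theorem statement_12_general
    {X : Type*} [MetricSpace X]
    [MeasurableSpace X]
    (μ : Measure X)
    (hμpos : ∀ (x : X) (r : ℝ), 0 < r → 0 < μ (closedBall x r))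
    (σ : ℝ → ℝ)
    (hσmono : StrictMonoOn σ (Set.Ici 0))
    (hσrange : ∀ r : ℝ, 0 ≤ r → σ r ∈ Set.Icc (0:ℝ) 1)
    (hσlc : ∀ r : ℝ, 0 < r → ContinuousWithinAt σ (Set.Iic r) r)
    (hσzero : Tendsto σ (nhdsWithin 0 (Set.Ioi 0)) (nhds 0))
    (hσtop : Tendsto σ atTop (nhds 1))
    (ν : ℝ → Measure ℝ)
    (hν : ∀ t : ℝ, 0 < t → ∀ a b : ℝ, 0 ≤ a → a ≤ b →
      ν t (Set.Ico a b) = ENNReal.ofReal (σ b ^ t - σ a ^ t))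
    (hνneg : ∀ t : ℝ, 0 < t → ν t (Set.Iio 0) = 0)
    (x : X) (c c' c'' r₀ : ℝ)
    (hc : 1 < c) (hcc' : c < c') (hc'c'' : c' < c'') (hr₀ : 0 ≤ r₀)
    (hV : ∀ r : ℝ, r₀ < r →
      ENNReal.ofReal c' * μ (starBall σ x r) ≤ μ (starBall σ x (c * r)) ∧
      μ (starBall σ x (c * r)) ≤ ENNReal.ofReal c'' * μ (starBall σ x r)) :
    (∀ a : ℝ, 0 < a → (∫⁻ s in Set.Ioi a, (μ (starBall σ x s))⁻¹) < ⊤) ∧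
    ∃ k₁ k₂ : ℝ, 0 < k₁ ∧ 0 < k₂ ∧
      ∀ y : X, r₀ < dstar σ x y →
        ENNReal.ofReal k₁ *
            (ENNReal.ofReal (dstar σ x y) / μ (starBall σ x (dstar σ x y))) ≤
          greenF μ ν x y ∧
        greenF μ ν x y ≤
          ENNReal.ofReal k₂ *
            (ENNReal.ofReal (dstar σ x y) / μ (starBall σ x (dstar σ x y))) := by
  have hσ := isDistanceDistribution_of_mem_Icc hσmono hσrange hσlc hσzero hσtop
  set V : ℝ → ℝ≥0∞ := fun s => μ (starBall σ x s)
  have hVmono : Monotone V := fun _ _ h => measure_mono fun _ hz => le_trans hz h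
  have hVpos : ∀ s, 0 < s → 0 < V s := fun s hs => by
    simpa only [V, starBall_eq_closedBall hσ x hs.le] using hμpos x _ (distOfDstar_pos hσ hs)
  have htail : ∀ ρ, r₀ < ρ → ∫⁻ s in Ioi ρ, (V s)⁻¹ ≤
      ENNReal.ofReal ((c - 1) / (1 - c / c')) * (ENNReal.ofReal ρ / V ρ) := fun ρ hρ =>
    lintegral_Ioi_inv_le_of_mul_le hVmono hc hcc' (hr₀.trans_lt hρ)
      fun r hr => (hV r (hρ.trans_le hr)).1
  have hc'0 : 0 < c' := one_pos.trans (hc.trans hcc')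
  refine ⟨fun a ha => ?_, (c - 1) / c'', (c - 1) / (1 - c / c'),
    div_pos (sub_pos.2 hc) (hc'0.trans hc'c''),
    div_pos (sub_pos.2 hc) (sub_pos.2 ((div_lt_one hc'0).2 hcc')), fun y hy => ?_⟩
  · have hρ : r₀ < max a r₀ + 1 := (le_max_right a r₀).trans_lt (lt_add_one _)
    refine lintegral_Ioi_inv_lt_top hVmono (hVpos a ha) ((htail _ hρ).trans_lt ?_)
    exact ENNReal.mul_lt_top ENNReal.ofReal_lt_top
      (ENNReal.div_lt_top ENNReal.ofReal_ne_top (hVpos _ (hr₀.trans_lt hρ)).ne')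
  · rw [greenF_eq_lintegral_inv_measure_starBall hσ ⟨hν, hνneg⟩ μ x y]
    exact ⟨le_lintegral_Ioi_inv_of_le_mul hVmono hc (hc'0.trans hc'c'') (hV _ hy).2, htail _ hy⟩

theorem statement_12
    {X : Type*} [MetricSpace X] [TopologicalSpace.SeparableSpace X]
    [MeasurableSpace X] [BorelSpace X]
    (hd : ∀ x y z : X, dist x z ≤ max (dist x y) (dist y z))
    (hcb : ∀ (x : X) (r : ℝ), IsCompact (closedBall x r))
    (μ : Measure X)
    (hμpos : ∀ (x : X) (r : ℝ), 0 < r → 0 < μ (closedBall x r))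
    (hμfin : ∀ (x : X) (r : ℝ), 0 < r → μ (closedBall x r) < ⊤)
    (σ : ℝ → ℝ)
    (hσmono : StrictMonoOn σ (Set.Ici 0))
    (hσrange : ∀ r : ℝ, 0 ≤ r → σ r ∈ Set.Icc (0:ℝ) 1)
    (hσlc : ∀ r : ℝ, 0 < r → ContinuousWithinAt σ (Set.Iic r) r)
    (hσzero : Tendsto σ (nhdsWithin 0 (Set.Ioi 0)) (nhds 0))
    (hσtop : Tendsto σ atTop (nhds 1))
    (ν : ℝ → Measure ℝ)
    (hν : ∀ t : ℝ, 0 < t → ∀ a b : ℝ, 0 ≤ a → a ≤ b →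
      ν t (Set.Ico a b) = ENNReal.ofReal (σ b ^ t - σ a ^ t))
    (hνneg : ∀ t : ℝ, 0 < t → ν t (Set.Iio 0) = 0)
    (x : X) (c c' c'' r₀ : ℝ)
    (hc : 1 < c) (hcc' : c < c') (hc'c'' : c' < c'') (hr₀ : 0 ≤ r₀)
    (hV : ∀ r : ℝ, r₀ < r →
      ENNReal.ofReal c' * μ (starBall σ x r) ≤ μ (starBall σ x (c * r)) ∧
      μ (starBall σ x (c * r)) ≤ ENNReal.ofReal c'' * μ (starBall σ x r)) :
    (∀ a : ℝ, 0 < a → (∫⁻ s in Set.Ioi a, (μ (starBall σ x s))⁻¹) < ⊤) ∧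
    ∃ k₁ k₂ : ℝ, 0 < k₁ ∧ 0 < k₂ ∧
      ∀ y : X, r₀ < dstar σ x y →
        ENNReal.ofReal k₁ *
            (ENNReal.ofReal (dstar σ x y) / μ (starBall σ x (dstar σ x y))) ≤
          greenF μ ν x y ∧
        greenF μ ν x y ≤
          ENNReal.ofReal k₂ *
            (ENNReal.ofReal (dstar σ x y) / μ (starBall σ x (dstar σ x y))) :=
  statement_12_general μ hμpos σ hσmono hσrange hσlc hσzero hσtop ν hν hνneg x c c' c'' r₀ hc hcc'
    hc'c'' hr₀ hV
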